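/- Let λ, μ > 1, k ∈ ℕ, and define Φ: C_c^∞((0,∞)) → C^∞((0,∞)²) by (Φh)(ξ,ζ) = ξ^{λ−1} ζ^{μ−1} (ξ+ζ)^{−λ−μ−2k+1} p(ξ,ζ) h(ξ+ζ), where p(ξ,ζ) = ∑_{j=0}^{k} (−1)^j (k choose j) [∏_{i=0}^{j−1}(λ+k−1−i)][∏_{i=0}^{k−j−1}(μ+k−1−i)] ξ^{k−j} ζ^{j}. Then there is a constant c(λ,μ,k) > 0 such that for all h ∈ C_c^∞((0,∞)), ∬_{(0,∞)²} |(Φh)(ξ,ζ)|² ξ^{1−λ} ζ^{1−μ} dξ dζ = c(λ,μ,k) ∫_0^∞ |h(η)|² η^{1−λ−μ−2k} dη, with c(λ,μ,k) = 2^{−λ−μ+1} ∫_{−1}^1 |C^{(k)}_{λ−1,μ−1}(v)|² (1−v)^{λ−1} (1+v)^{μ−1} dv. -/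

import Mathlib

open Finset MeasureTheory

/-- The explicit polynomial `p(ξ,ζ)` (the symbol of the rank-one Rankin–Cohen bracket). -/
noncomputable def pPoly (l m : ℝ) (k : ℕ) (x y : ℝ) : ℝ :=
  ∑ j ∈ range (k + 1), (-1:ℝ) ^ j * (k.choose j) *
    (∏ i ∈ range j, (l + k - 1 - i)) * (∏ i ∈ range (k - j), (m + k - 1 - i)) *
    x ^ (k - j) * y ^ j

lemma pPoly_homog (l m : ℝ) (k : ℕ) (a x y : ℝ) :
    pPoly l m k (a*x) (a*y) = a^k * pPoly l m k x y := by
  unfold pPoly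
  rw [Finset.mul_sum]
  refine Finset.sum_congr rfl fun j hj => ?_
  rw [Finset.mem_range, Nat.lt_succ_iff] at hj
  have hk : a ^ (k - j) * a ^ j = a ^ k := by rw [← pow_add, Nat.sub_add_cancel hj]
  rw [mul_pow, mul_pow, ← hk]; ring

lemma continuous_pPoly (l m : ℝ) (k : ℕ) : Continuous fun p : ℝ × ℝ => pPoly l m k p.1 p.2 := by
  unfold pPoly; fun_prop

lemma pPoly_zero_left (l m : ℝ) (k : ℕ) :
    pPoly l m k 0 1 = (-1:ℝ)^k * ∏ i ∈ range k, (l + k - 1 - i) := by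
  unfold pPoly
  rw [Finset.sum_eq_single k]
  · simp
  · intro j hj hjk
    have hj' : j < k := lt_of_le_of_ne (Nat.lt_succ_iff.mp (Finset.mem_range.mp hj)) hjk
    have : 0 < k - j := Nat.sub_pos_of_lt hj'
    simp [zero_pow this.ne']
  · simp

/-- `C^{(k)}_{λ−1,μ−1}(v) = p((1−v)/2, (1+v)/2)`. -/
noncomputable def CPoly (l m : ℝ) (k : ℕ) (v : ℝ) : ℝ :=
  pPoly l m k ((1 - v) / 2) ((1 + v) / 2)

lemma continuous_CPoly (l m : ℝ) (k : ℕ) : Continuous (CPoly l m k) := by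
  unfold CPoly
  have hc : Continuous fun v : ℝ => (((1 - v) / 2 : ℝ), ((1 + v) / 2 : ℝ)) := by fun_prop
  exact (continuous_pPoly l m k).comp hc

lemma CPoly_one_ne (l m : ℝ) (hl : 1 < l) (k : ℕ) : CPoly l m k 1 ≠ 0 := by
  unfold CPoly
  norm_num
  rw [pPoly_zero_left]
  refine mul_ne_zero (pow_ne_zero _ (by norm_num)) ?_
  refine ne_of_gt (Finset.prod_pos fun i hi => ?_)
  have : (i:ℝ) ≤ (k:ℝ) - 1 := by
    have := Finset.mem_range.mp hi
    have : (i:ℝ) + 1 ≤ k := by exact_mod_cast this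
    linarith
  linarith

lemma rpow_cont (r : ℝ) (hr : 0 ≤ r) : Continuous fun x : ℝ => x ^ r :=
  continuous_iff_continuousAt.mpr fun x => Real.continuousAt_rpow_const x r (Or.inr hr)

lemma Jpos (l m : ℝ) (hl : 1 < l) (hm : 1 < m) (k : ℕ) :
    0 < ∫ v in Set.Ioo (-1:ℝ) 1, (CPoly l m k v) ^ 2 * (1 - v) ^ (l - 1) * (1 + v) ^ (m - 1) := by
  set g : ℝ → ℝ := fun v => (CPoly l m k v) ^ 2 * (1 - v) ^ (l - 1) * (1 + v) ^ (m - 1) with hg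
  have hgc : Continuous g := by
    apply Continuous.mul
    apply Continuous.mul
    · exact (continuous_CPoly l m k).pow 2
    · exact (rpow_cont (l-1) (by linarith)).comp (by fun_prop)
    · exact (rpow_cont (m-1) (by linarith)).comp (by fun_prop)
  have hint : IntegrableOn g (Set.Ioo (-1:ℝ) 1) :=
    (hgc.integrableOn_Icc (a := -1) (b := 1)).mono_set Set.Ioo_subset_Icc_self
  have hnn : 0 ≤ᶠ[ae (volume.restrict (Set.Ioo (-1:ℝ) 1))] g := by
    refine (ae_restrict_iff' measurableSet_Ioo).2 (Filter.Eventually.of_forall fun v hv => ?_)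
    have h1 : (0:ℝ) ≤ 1 - v := by linarith [hv.2]
    have h2 : (0:ℝ) ≤ 1 + v := by linarith [hv.1]
    positivity
  rw [setIntegral_pos_iff_support_of_nonneg_ae hnn hint]
  -- find interval near 1 where CPoly ≠ 0
  have hev : ∀ᶠ v in nhds (1:ℝ), CPoly l m k v ≠ 0 :=
    ((continuous_CPoly l m k).continuousAt).eventually_ne (CPoly_one_ne l m hl k)
  obtain ⟨ε, hε, hball⟩ := Metric.eventually_nhds_iff.mp hev
  set a : ℝ := max (1 - ε/2) 0 with ha
  have ha1 : a < 1 := by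
    apply max_lt <;> linarith
  have hsub : Set.Ioo a 1 ⊆ Function.support g ∩ Set.Ioo (-1:ℝ) 1 := by
    intro v hv
    have hv1 : a < v := hv.1
    have hv2 : v < 1 := hv.2
    have hva : 0 < v := lt_of_le_of_lt (le_max_right _ _) hv1
    have hCv : CPoly l m k v ≠ 0 := by
      apply hball
      rw [Real.dist_eq, abs_lt]
      constructor
      · have : 1 - ε/2 ≤ a := le_max_left _ _
        linarith
      · linarith
    constructor
    · have h1 : (0:ℝ) < 1 - v := by linarith
      have h2 : (0:ℝ) < 1 + v := by linarith
      have : 0 < g v := by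
        have := Real.rpow_pos_of_pos h1 (l-1)
        have := Real.rpow_pos_of_pos h2 (m-1)
        positivity
      exact this.ne'
    · exact ⟨by linarith, hv2⟩
  refine lt_of_lt_of_le ?_ (measure_mono hsub)
  rw [Real.volume_Ioo]
  simp only [ENNReal.ofReal_pos]
  linarith

/-- The operator `Φ` in the rank-one `L²`-model. -/
noncomputable def PhiOp (l m : ℝ) (k : ℕ) (h : ℝ → ℝ) (x y : ℝ) : ℝ :=
  x ^ (l - 1) * y ^ (m - 1) * (x + y) ^ (-l - m - 2 * (k:ℝ) + 1) * pPoly l m k x y * h (x + y)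

/-- `Φ` is, up to an explicit positive constant, a partial isometry in the rank-one `L²`-model. -/
theorem phi_partial_isometry (l m : ℝ) (hl : 1 < l) (hm : 1 < m) (k : ℕ) :
    0 < 2 ^ (-l - m + 1) *
        ∫ v in Set.Ioo (-1:ℝ) 1, (CPoly l m k v) ^ 2 * (1 - v) ^ (l - 1) * (1 + v) ^ (m - 1) ∧
    ∀ h : ℝ → ℝ, ContDiff ℝ (⊤ : ℕ∞) h → HasCompactSupport h → tsupport h ⊆ Set.Ioi 0 →
      (∫ x in Set.Ioi (0:ℝ), ∫ y in Set.Ioi (0:ℝ),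
          (PhiOp l m k h x y) ^ 2 * x ^ (1 - l) * y ^ (1 - m)) =
        (2 ^ (-l - m + 1) *
          ∫ v in Set.Ioo (-1:ℝ) 1,
            (CPoly l m k v) ^ 2 * (1 - v) ^ (l - 1) * (1 + v) ^ (m - 1)) *
        ∫ η in Set.Ioi (0:ℝ), (h η) ^ 2 * η ^ (1 - l - m - 2 * (k:ℝ)) := by
  set Jv : ℝ := ∫ v in Set.Ioo (-1:ℝ) 1,
      (CPoly l m k v) ^ 2 * (1 - v) ^ (l - 1) * (1 + v) ^ (m - 1) with hJv
  constructor
  · exact mul_pos (Real.rpow_pos_of_pos two_pos _) (Jpos l m hl hm k)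
  intro h hsm hcs hsupp
  set c : ℝ := (-l - m - 2*(k:ℝ) + 1) + (-l - m - 2*(k:ℝ) + 1) with hc
  set q : ℝ → ℝ := fun η => η ^ c * h η ^ 2 with hq
  set W : ℝ × ℝ → ℝ := fun p =>
    p.1 ^ (l-1) * (p.2 - p.1) ^ (m-1) * (pPoly l m k p.1 (p.2 - p.1))^2 * q p.2 with hW
  set s : Set (ℝ × ℝ) := {p : ℝ × ℝ | 0 < p.1 ∧ p.1 < p.2} with hs
  set f0 : ℝ × ℝ → ℝ := s.indicator W with hf0
  -- continuity of q
  have hh0 : ∀ η ∉ tsupport h, h η = 0 := fun η hη => image_eq_zero_of_notMem_tsupport hη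
  have hqc : Continuous q := by
    rw [continuous_iff_continuousAt]
    intro η
    rcases ne_or_eq η 0 with hη | hη
    · exact (Real.continuousAt_rpow_const η c (Or.inl hη)).mul
        ((hsm.continuous.pow 2).continuousAt)
    · subst hη
      have hopen : IsOpen (tsupport h)ᶜ := (isClosed_tsupport h).isOpen_compl
      have h0 : (0:ℝ) ∈ (tsupport h)ᶜ := fun hmem => lt_irrefl 0 (Set.mem_Ioi.mp (hsupp hmem))
      have hev : q =ᶠ[nhds (0:ℝ)] fun _ => (0:ℝ) := by
        filter_upwards [hopen.mem_nhds h0] with η hη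
        simp [hq, hh0 η hη]
      exact hev.continuousAt
  -- continuity of W
  have hW1 : Continuous fun p : ℝ × ℝ => p.1 ^ (l-1) :=
    (rpow_cont _ (by linarith)).comp continuous_fst
  have hW2 : Continuous fun p : ℝ × ℝ => (p.2 - p.1) ^ (m-1) :=
    (rpow_cont _ (by linarith)).comp (continuous_snd.sub continuous_fst)
  have hW3 : Continuous fun p : ℝ × ℝ => (pPoly l m k p.1 (p.2 - p.1))^2 := by
    have : Continuous fun p : ℝ × ℝ => (p.1, p.2 - p.1) := by fun_prop
    exact ((continuous_pPoly l m k).comp this).pow 2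
  have hWc : Continuous W := ((hW1.mul hW2).mul hW3).mul (hqc.comp continuous_snd)
  -- measurability of s
  have hsmeas : MeasurableSet s := by
    have : s = {p : ℝ × ℝ | 0 < p.1} ∩ {p : ℝ × ℝ | p.1 < p.2} := rfl
    rw [this]
    exact (measurableSet_lt measurable_const measurable_fst).inter
      (measurableSet_lt measurable_fst measurable_snd)
  -- compact support bound
  obtain ⟨B', hB'⟩ := hcs.isBounded.subset_closedBall 0
  set B : ℝ := max B' 1 with hB
  have hK : tsupport h ⊆ Set.Icc (-B) B := by
    intro η hη
    have := hB' hη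
    rw [Real.closedBall_eq_Icc] at this
    constructor
    · have := this.1; have hBle : B' ≤ B := le_max_left _ _; linarith [this]
    · exact le_trans this.2 (by have := le_max_left B' 1; linarith)
  set T : Set (ℝ × ℝ) := Set.Icc (0:ℝ) B ×ˢ Set.Icc (-B) B with hT
  have hTc : IsCompact T := isCompact_Icc.prod isCompact_Icc
  have hTm : MeasurableSet T := (measurableSet_Icc).prod measurableSet_Icc
  have hsupp0 : Function.support f0 ⊆ T := by
    intro p hp
    rw [Function.mem_support, hf0] at hp
    have hps : p ∈ s := by
      by_contra hns; exact hp (Set.indicator_of_notMem hns W)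
    have hWp : W p ≠ 0 := by rwa [Set.indicator_of_mem hps W] at hp
    have hqp : q p.2 ≠ 0 := by
      intro hz; apply hWp; simp only [hW, hz, mul_zero]
    have hhp : h p.2 ≠ 0 := by
      intro hz; apply hqp; simp only [hq, hz]; ring
    have hp2 : p.2 ∈ tsupport h := subset_tsupport h hhp
    have h2 := hK hp2
    exact ⟨⟨hps.1.le, le_trans hps.2.le h2.2⟩, h2⟩
  have hint0 : Integrable f0 := by
    obtain ⟨C, hC⟩ := hTc.exists_bound_of_continuousOn hWc.continuousOn
    rw [← Set.indicator_eq_self.mpr hsupp0, integrable_indicator_iff hTm]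
    refine Measure.integrableOn_of_bounded (M := C) hTc.measure_lt_top.ne
      ((hWc.measurable.indicator hsmeas).aestronglyMeasurable) ?_
    refine (ae_restrict_iff' hTm).2 (Filter.Eventually.of_forall fun p hp => ?_)
    exact le_trans (norm_indicator_le_norm_self W p) (hC p hp)
  -- main chain
  calc ∫ x in Set.Ioi (0:ℝ), ∫ y in Set.Ioi (0:ℝ),
          (PhiOp l m k h x y) ^ 2 * x ^ (1 - l) * y ^ (1 - m)
      = ∫ x in Set.Ioi (0:ℝ), ∫ η in Set.Ioi x, W (x, η) := by
        refine setIntegral_congr_fun measurableSet_Ioi fun x hx => ?_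
        have hx' : (0:ℝ) < x := hx
        have htrans : ∫ y in Set.Ioi (0:ℝ), W (x, y + x) = ∫ η in Set.Ioi x, W (x, η) := by
          have hpre : (fun y : ℝ => y + x) ⁻¹' Set.Ioi x = Set.Ioi 0 := by
            ext y; simp [Set.mem_preimage, Set.mem_Ioi]
          have htr := (measurePreserving_add_right volume x).setIntegral_preimage_emb
            (measurableEmbedding_addRight x) (fun η => W (x, η)) (Set.Ioi x)
          rwa [hpre] at htr
        rw [← htrans]
        refine setIntegral_congr_fun measurableSet_Ioi fun y hy => ?_
        have hy' : (0:ℝ) < y := hy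
        have hxy : (0:ℝ) < x + y := by linarith
        have e1 : (x ^ (l-1))^2 * x^(1-l) = x^(l-1) := by
          rw [pow_two, ← Real.rpow_add hx', ← Real.rpow_add hx']; congr 1; ring
        have e2 : (y ^ (m-1))^2 * y^(1-m) = y^(m-1) := by
          rw [pow_two, ← Real.rpow_add hy', ← Real.rpow_add hy']; congr 1; ring
        have e3 : ((x+y) ^ (-l - m - 2*(k:ℝ) + 1))^2 = (x+y)^c := by
          rw [pow_two, ← Real.rpow_add hxy, hc]
        show (PhiOp l m k h x y) ^ 2 * x ^ (1 - l) * y ^ (1 - m) = W (x, y + x)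
        simp only [hW, hq]
        rw [show ((x, y+x) : ℝ × ℝ).2 - (x, y+x).1 = y by simp,
          show y + x = x + y from add_comm y x]
        have expand : PhiOp l m k h x y ^ 2 * x ^ (1-l) * y ^ (1-m)
            = ((x ^ (l-1))^2 * x^(1-l)) * ((y ^ (m-1))^2 * y^(1-m))
              * ((x+y) ^ (-l-m-2*(k:ℝ)+1))^2 * (pPoly l m k x y)^2 * (h (x+y))^2 := by
          simp only [PhiOp]; ring
        rw [expand, e1, e2, e3]; ring
    _ = ∫ x : ℝ, ∫ η : ℝ, f0 (x, η) := by
        have inner_eq : Set.EqOn (fun x => ∫ η in Set.Ioi x, W (x, η))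
            (fun x => ∫ η : ℝ, f0 (x, η)) (Set.Ioi 0) := by
          intro x hx
          have hx' : (0:ℝ) < x := hx
          simp only
          rw [← integral_indicator measurableSet_Ioi]
          refine integral_congr_ae (Filter.Eventually.of_forall fun η => ?_)
          show Set.indicator (Set.Ioi x) (fun η => W (x, η)) η = f0 (x, η)
          rw [hf0]
          by_cases hη : x < η
          · rw [Set.indicator_of_mem (Set.mem_Ioi.mpr hη),
              Set.indicator_of_mem (show ((x,η) : ℝ × ℝ) ∈ s from ⟨hx', hη⟩)]
          · rw [Set.indicator_of_notMem (fun hmem => hη (Set.mem_Ioi.mp hmem)),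
              Set.indicator_of_notMem (show ((x,η) : ℝ × ℝ) ∉ s from fun hmem => hη hmem.2)]
        rw [setIntegral_congr_fun measurableSet_Ioi inner_eq]
        refine setIntegral_eq_integral_of_forall_compl_eq_zero fun x hx => ?_
        have hz : (fun η : ℝ => f0 (x, η)) = fun _ => (0:ℝ) := funext fun η => by
          rw [hf0]
          exact Set.indicator_of_notMem
            (show ((x,η) : ℝ × ℝ) ∉ s from fun hmem => hx (Set.mem_Ioi.mpr hmem.1)) W
        show (∫ η : ℝ, f0 (x, η)) = 0
        rw [hz, integral_zero]
    _ = ∫ η : ℝ, ∫ x : ℝ, f0 (x, η) := integral_integral_swap hint0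
    _ = ∫ η in Set.Ioi (0:ℝ), ∫ x in Set.Ioo 0 η, W (x, η) := by
        rw [← setIntegral_eq_integral_of_forall_compl_eq_zero
          (f := fun η => ∫ x : ℝ, f0 (x, η)) (s := Set.Ioi (0:ℝ)) ?hz]
        case hz =>
          intro η hη
          have hz : (fun x : ℝ => f0 (x, η)) = fun _ => (0:ℝ) := funext fun x => by
            rw [hf0]
            exact Set.indicator_of_notMem
              (show ((x,η) : ℝ × ℝ) ∉ s from
                fun hmem => hη (Set.mem_Ioi.mpr (lt_trans hmem.1 hmem.2))) W
          show (∫ x : ℝ, f0 (x, η)) = 0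
          rw [hz, integral_zero]
        refine setIntegral_congr_fun measurableSet_Ioi fun η hη => ?_
        rw [← integral_indicator measurableSet_Ioo]
        refine integral_congr_ae (Filter.Eventually.of_forall fun x => ?_)
        show f0 (x, η) = Set.indicator (Set.Ioo 0 η) (fun x => W (x, η)) x
        rw [hf0]
        by_cases hx : x ∈ Set.Ioo (0:ℝ) η
        · rw [Set.indicator_of_mem (show ((x,η) : ℝ × ℝ) ∈ s from ⟨hx.1, hx.2⟩),
            Set.indicator_of_mem hx]
        · rw [Set.indicator_of_notMem
              (show ((x,η) : ℝ × ℝ) ∉ s from fun hmem => hx ⟨hmem.1, hmem.2⟩),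
            Set.indicator_of_notMem hx]
    _ = ∫ η in Set.Ioi (0:ℝ), (2 ^ (-l-m+1) * Jv) * (h η ^ 2 * η ^ (1 - l - m - 2*(k:ℝ))) := by
        refine setIntegral_congr_fun measurableSet_Ioi fun η hη => ?_
        have hη' : (0:ℝ) < η := hη
        set g : ℝ → ℝ := fun x => x^(l-1) * (η - x)^(m-1) * (pPoly l m k x (η - x))^2 with hg
        have h1 : (∫ x in Set.Ioo (0:ℝ) η, W (x, η)) = (∫ x in Set.Ioo (0:ℝ) η, g x) * q η :=
          integral_mul_const (q η) g
        have hIoo : (∫ x in Set.Ioo (0:ℝ) η, g x) = ∫ x in (0:ℝ)..η, g x := by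
          rw [intervalIntegral.integral_of_le hη'.le, integral_Ioc_eq_integral_Ioo]
        have hne : -(η/2) ≠ 0 := by
          intro hz; exact hη'.ne' (by linarith [neg_eq_zero.mp hz])
        have hsub := intervalIntegral.integral_comp_mul_add (a := (1:ℝ)) (b := (-1:ℝ)) g hne (η/2)
        rw [show -(η/2) * 1 + η/2 = 0 by ring, show -(η/2) * (-1) + η/2 = η by ring] at hsub
        rw [intervalIntegral.integral_symm (-1:ℝ) 1, smul_eq_mul] at hsub
        have hsub2 : ∫ x in (0:ℝ)..η, g x = (η/2) * ∫ v in (-1:ℝ)..1, g (-(η/2)*v + η/2) := by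
          have h2 : (-(η/2)) * (-(∫ v in (-1:ℝ)..1, g (-(η/2)*v + η/2)))
              = (-(η/2)) * ((-(η/2))⁻¹ * ∫ x in (0:ℝ)..η, g x) := by rw [hsub]
          rw [mul_inv_cancel_left₀ hne] at h2
          rw [← h2]; ring
        set K0 : ℝ := η^(l-1) * η^(m-1) * (η:ℝ)^(2*k) / (2^(l-1) * 2^(m-1)) with hK0
        have d1 : (2:ℝ)^(l-1) ≠ 0 := (Real.rpow_pos_of_pos two_pos _).ne'
        have d2 : (2:ℝ)^(m-1) ≠ 0 := (Real.rpow_pos_of_pos two_pos _).ne'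
        have hcongr : Set.EqOn (fun v => g (-(η/2)*v + η/2))
            (fun v => K0 * ((CPoly l m k v)^2 * (1-v)^(l-1) * (1+v)^(m-1)))
            (Set.uIcc (-1:ℝ) 1) := by
          intro v hv
          rw [Set.uIcc_of_le (by norm_num : (-1:ℝ) ≤ 1)] at hv
          obtain ⟨hv1, hv2⟩ := hv
          have h1v : (0:ℝ) ≤ (1-v)/2 := by linarith
          have h2v : (0:ℝ) ≤ (1+v)/2 := by linarith
          have h1v' : (0:ℝ) ≤ 1-v := by linarith
          have h2v' : (0:ℝ) ≤ 1+v := by linarith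
          simp only [hg, hK0, CPoly]
          rw [show -(η/2)*v + η/2 = η * ((1-v)/2) by ring,
              show η - η * ((1-v)/2) = η * ((1+v)/2) by ring,
              Real.mul_rpow hη'.le h1v, Real.mul_rpow hη'.le h2v,
              pPoly_homog,
              Real.div_rpow h1v' (by norm_num : (0:ℝ) ≤ 2) (l-1),
              Real.div_rpow h2v' (by norm_num : (0:ℝ) ≤ 2) (m-1)]
          field_simp
          ring
        have hval : ∫ v in (-1:ℝ)..1, g (-(η/2)*v + η/2) = K0 * Jv := by
          rw [intervalIntegral.integral_congr hcongr, intervalIntegral.integral_const_mul]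
          congr 1
          rw [intervalIntegral.integral_of_le (by norm_num : (-1:ℝ) ≤ 1),
            integral_Ioc_eq_integral_Ioo]
        rw [h1, hIoo, hsub2, hval]
        have key1 : η^(l-1) * η^(m-1) * (η:ℝ)^(2*k) * η^c * η = η^(1-l-m-2*(k:ℝ)) := by
          rw [← Real.rpow_natCast η (2*k), ← Real.rpow_add hη', ← Real.rpow_add hη',
            ← Real.rpow_add hη', ← Real.rpow_add_one hη'.ne']
          congr 1
          push_cast
          rw [hc]; ring
        have key2 : (2:ℝ)^(l-1) * 2^(m-1) * 2 * (2:ℝ)^(-l-m+1) = 1 := by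
          rw [show (-l-m+1 : ℝ) = (-(l-1)) + (-(m-1)) + (-1) by ring,
            Real.rpow_add two_pos, Real.rpow_add two_pos, Real.rpow_neg_one,
            Real.rpow_neg (by norm_num : (0:ℝ) ≤ 2), Real.rpow_neg (by norm_num : (0:ℝ) ≤ 2)]
          field_simp
        show (η/2) * (K0 * Jv) * q η = 2 ^ (-l-m+1) * Jv * (h η ^ 2 * η ^ (1 - l - m - 2*(k:ℝ)))
        rw [hq, hK0, ← key1]
        field_simp
        linear_combination (-(Jv * h η ^ 2)) * key2
    _ = (2 ^ (-l - m + 1) * Jv) * ∫ η in Set.Ioi (0:ℝ), h η ^ 2 * η ^ (1 - l - m - 2*(k:ℝ)) := by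
        rw [integral_const_mul]
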